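/- On the flat circle with uniform measure and linearly decaying similarity g(x,y) = max(0, 1 - d(x,y)/ε) with ε ∈ (0,1/2], the 2-item similarity test success probability equals 1/2 + b - (3/2 - log 2)·b², where b = 2ε. -/

import Mathlib

open MeasureTheory

/-- Distance on the flat circle `[0,1)`. -/
noncomputable def circleDist (x y : ℝ) : ℝ := min |x - y| (1 - |x - y|)

/-- Linearly decaying similarity function with resolution `ε` on the flat circle. -/
noncomputable def glin (ε x y : ℝ) : ℝ := max 0 (1 - circleDist x y / ε)

/-- Probability of picking the first item, with the convention `0/(0+0) = 1/2`. -/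
noncomputable def decFirst (ε x₁ x₂ p : ℝ) : ℝ :=
  if glin ε x₁ p + glin ε x₂ p = 0 then 1/2
  else glin ε x₁ p / (glin ε x₁ p + glin ε x₂ p)

/-- Probability of picking the item closest to the probe `p`. -/
noncomputable def simSucc (ε x₁ x₂ p : ℝ) : ℝ :=
  if circleDist x₁ p < circleDist x₂ p then decFirst ε x₁ x₂ p
  else if circleDist x₂ p < circleDist x₁ p then decFirst ε x₂ x₁ p
  else 1

/-!
For a fixed probe `p`, the distance `circleDist x p` of a uniform point `x ∈ [0,1)` is uniform on
`[0, 1/2]` with density `2`, so the success probability is `4 ∫∫_{[0,1/2]²} S(s,t)`, where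
`S(s,t)` (`successOfDist`) is the success probability for two items at distances `s` and `t` from
the probe. Off the diagonal `S(s,t) = W(s,t) + W(t,s)`, where `W(s,t)` (`closerPicked`) is the
probability that the first item is the strictly closer one and is picked; by Fubini the double
integral is `2 ∫∫ W`. For `s < t`, `W(s,t)` equals `(ε - s)/(2ε - s - t)` when `t ≤ ε`, `1` when
`s < ε ≤ t` and `1/2` when `ε ≤ s`, so `∫ W(s,t) dt` is `(ε - s) log 2 + (1/2 - ε)` for `s < ε`
and `(1/2 - s)/2` for `s ≥ ε`, and the outer integral is elementary.
-/

open Set intervalIntegral Function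

lemma abs_sub_round_eq_min_abs {y : ℝ} (hy : |y| ≤ 1) : |y - round y| = min |y| (1 - |y|) := by
  obtain ⟨hy₁, hy₂⟩ := abs_le.1 hy
  refine le_antisymm (le_min ?_ ?_) ?_
  · simpa using round_le y 0
  · rcases le_total 0 y with h | h
    · simpa [abs_of_nonneg h, abs_of_nonpos (by linarith : y - 1 ≤ 0)] using round_le y 1
    · simpa [abs_of_nonpos h, abs_of_nonneg (by linarith : 0 ≤ y + 1), add_comm] using
        round_le y (-1)
  · obtain h | h | h := lt_trichotomy (round y) 0
    · have : (round y : ℝ) ≤ -1 := by exact_mod_cast Int.le_sub_one_of_lt h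
      exact min_le_of_right_le (by rw [le_abs]; left; linarith [neg_abs_le y])
    · simp [h]
    · have : (1 : ℝ) ≤ round y := by exact_mod_cast h
      exact min_le_of_right_le (by rw [le_abs]; right; linarith [le_abs_self y])

lemma circleDist_eq_abs_sub_round {x p : ℝ} (h : |x - p| ≤ 1) :
    circleDist x p = |(x - p) - round (x - p)| :=
  (abs_sub_round_eq_min_abs h).symm

theorem setIntegral_Ico_circleDist {E : Type*} [NormedAddCommGroup E] [NormedSpace ℝ E]
    {f : ℝ → E} (hf : IntervalIntegrable f volume 0 (1 / 2)) {p : ℝ} (hp : p ∈ Icc (0 : ℝ) 1) :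
    ∫ x in Ico (0 : ℝ) 1, f (circleDist x p) = (2 : ℝ) • ∫ t in (0 : ℝ)..1 / 2, f t := by
  set F : ℝ → E := fun y => f |y - round y|
  have hF : Periodic F 1 := fun y => by simp only [F, round_add_one]; push_cast; ring_nf
  have hF₁ : EqOn F f (uIcc 0 (1 / 2)) := fun y hy => by
    rw [uIcc_of_le (by norm_num)] at hy
    simp only [F, abs_sub_round_eq_min_abs (abs_le.2 ⟨by linarith [hy.1], by linarith [hy.2]⟩),
      abs_of_nonneg hy.1]
    exact congrArg f (min_eq_left (by linarith [hy.2]))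
  have hF₂ : EqOn F (fun y => f (1 - y)) (uIcc (1 / 2) 1) := fun y hy => by
    rw [uIcc_of_le (by norm_num)] at hy
    simp only [F, abs_sub_round_eq_min_abs (abs_le.2 ⟨by linarith [hy.1], by linarith [hy.2]⟩),
      abs_of_nonneg (by linarith [hy.1] : (0 : ℝ) ≤ y)]
    exact congrArg f (min_eq_right (by linarith [hy.1]))
  have hf' : IntervalIntegrable (fun y => f (1 - y)) volume (1 / 2) 1 := by
    simpa only [sub_zero, show (1 : ℝ) - 1 / 2 = 1 / 2 by norm_num] using (hf.comp_sub_left 1).symm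
  calc ∫ x in Ico (0 : ℝ) 1, f (circleDist x p)
      = ∫ x in (0 : ℝ)..1, F (x - p) := by
        rw [integral_of_le zero_le_one, ← setIntegral_congr_set Ico_ae_eq_Ioc]
        refine setIntegral_congr_fun measurableSet_Ico fun x hx => ?_
        rw [circleDist_eq_abs_sub_round
          (abs_le.2 ⟨by linarith [hx.1, hp.2], by linarith [hx.2, hp.1]⟩)]
    _ = ∫ y in (0 : ℝ)..0 + 1, F y := by
        rw [integral_comp_sub_right, ← hF.intervalIntegral_add_eq (0 - p) 0]; ring_nf
    _ = (∫ y in (0 : ℝ)..1 / 2, F y) + ∫ y in (1 / 2 : ℝ)..1, F y := by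
        rw [zero_add, integral_add_adjacent_intervals
          ((intervalIntegrable_congr (hF₁.mono uIoc_subset_uIcc)).2 hf)
          ((intervalIntegrable_congr (hF₂.mono uIoc_subset_uIcc)).2 hf')]
    _ = (2 : ℝ) • ∫ t in (0 : ℝ)..1 / 2, f t := by
        rw [integral_congr hF₁, integral_congr hF₂, integral_comp_sub_left, two_smul]
        norm_num

theorem integral_integral_eq_two_nsmul_of_eq_add_swap {α E : Type*} [MeasurableSpace α]
    [NormedAddCommGroup E] [NormedSpace ℝ E] {μ : Measure α} [SFinite μ] [NullSingletonClass μ]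
    {f h : α → α → E} (hh : Integrable (uncurry h) (μ.prod μ))
    (hf : ∀ s t, s ≠ t → f s t = h s t + h t s) :
    ∫ s, ∫ t, f s t ∂μ ∂μ = 2 • ∫ s, ∫ t, h s t ∂μ ∂μ := by
  have hh' : Integrable (uncurry fun s t => h t s) (μ.prod μ) := hh.swap
  have hsplit : ∀ᵐ s ∂μ, ∫ t, f s t ∂μ = ∫ t, h s t ∂μ + ∫ t, h t s ∂μ := by
    filter_upwards [hh.prod_right_ae, hh'.prod_right_ae] with s hs hs'
    rw [← integral_add (f := fun t => h s t) (g := fun t => h t s) hs hs']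
    refine integral_congr_ae ?_
    filter_upwards [μ.ae_ne s] with t ht using hf s t ht.symm
  rw [integral_congr_ae hsplit,
    integral_add (f := fun s => ∫ t, h s t ∂μ) (g := fun s => ∫ t, h t s ∂μ)
      hh.integral_prod_left hh'.integral_prod_left,
    integral_integral_swap hh', two_nsmul]

lemma intervalIntegrable_of_abs_le {f : ℝ → ℝ} (hf : Measurable f) {C : ℝ} (hC : ∀ x, |f x| ≤ C)
    (a b : ℝ) : IntervalIntegrable f volume a b :=
  (intervalIntegrable_iff).2 <| Measure.integrableOn_of_bounded measure_Ioc_lt_top.ne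
    hf.aestronglyMeasurable (ae_of_all _ hC)

section BoundedKernel

variable {F : ℝ → ℝ → ℝ} {C : ℝ}

lemma intervalIntegrable_integral_of_abs_le (hF : Measurable (uncurry F))
    (hC : ∀ s t, |F s t| ≤ C) {a b : ℝ} (hab : a ≤ b) (c d : ℝ) :
    IntervalIntegrable (fun s => ∫ t in a..b, F s t) volume c d := by
  refine intervalIntegrable_of_abs_le (C := C * |b - a|) ?_ (fun s => ?_) c d
  · simp only [integral_of_le hab]
    exact (hF.stronglyMeasurable.integral_prod_right (ν := volume.restrict (Ioc a b))).measurable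
  · exact norm_integral_le_of_norm_le_const (f := F s) fun t _ => hC s t

lemma integrable_uncurry_of_abs_le (hF : Measurable (uncurry F)) (hC : ∀ s t, |F s t| ≤ C)
    (a b : ℝ) :
    Integrable (uncurry F) ((volume.restrict (Ioc a b)).prod (volume.restrict (Ioc a b))) :=
  Integrable.of_bound hF.aestronglyMeasurable C (ae_of_all _ fun q => hC q.1 q.2)

theorem setIntegral_Ico_Ico_circleDist (hF : Measurable (uncurry F)) (hC : ∀ s t, |F s t| ≤ C)
    {p : ℝ} (hp : p ∈ Icc (0 : ℝ) 1) :
    ∫ x₁ in Ico (0 : ℝ) 1, ∫ x₂ in Ico (0 : ℝ) 1, F (circleDist x₁ p) (circleDist x₂ p)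
      = 4 * ∫ s in (0 : ℝ)..1 / 2, ∫ t in (0 : ℝ)..1 / 2, F s t := by
  have hFs : ∀ s, Measurable (F s) := fun s => hF.comp (measurable_const.prodMk measurable_id)
  simp only [setIntegral_Ico_circleDist (intervalIntegrable_of_abs_le (hFs _) (hC _) _ _) hp,
    smul_eq_mul]
  rw [MeasureTheory.integral_const_mul, setIntegral_Ico_circleDist
    (intervalIntegrable_integral_of_abs_le hF hC (by norm_num) _ _) hp, smul_eq_mul]
  ring

end BoundedKernel

noncomputable def pickFirst (g : ℝ → ℝ) (s t : ℝ) : ℝ :=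
  if g s + g t = 0 then 1 / 2 else g s / (g s + g t)

/-- `simSucc` as a function of the distances `s`, `t` of the two items to the probe, for a
similarity `g` of the distance. -/
noncomputable def successOfDist (g : ℝ → ℝ) (s t : ℝ) : ℝ :=
  if s < t then pickFirst g s t else if t < s then pickFirst g t s else 1

noncomputable def closerPicked (g : ℝ → ℝ) (s t : ℝ) : ℝ :=
  if s < t then pickFirst g s t else 0

section Profile

variable {g : ℝ → ℝ}

lemma abs_pickFirst_le_one (hg : ∀ s, 0 ≤ g s) (s t : ℝ) : |pickFirst g s t| ≤ 1 := by
  unfold pickFirst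
  split_ifs with h
  · norm_num
  · rw [abs_div, abs_of_nonneg (hg s), abs_of_nonneg (add_nonneg (hg s) (hg t))]
    exact div_le_one_of_le₀ (le_add_of_nonneg_right (hg t)) (add_nonneg (hg s) (hg t))

lemma abs_successOfDist_le_one (hg : ∀ s, 0 ≤ g s) (s t : ℝ) : |successOfDist g s t| ≤ 1 := by
  unfold successOfDist
  split_ifs <;> simp [abs_pickFirst_le_one hg]

lemma abs_closerPicked_le_one (hg : ∀ s, 0 ≤ g s) (s t : ℝ) : |closerPicked g s t| ≤ 1 := by
  unfold closerPicked
  split_ifs <;> simp [abs_pickFirst_le_one hg]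

lemma measurable_pickFirst (hg : Measurable g) : Measurable (uncurry (pickFirst g)) := by
  have h₁ : Measurable fun q : ℝ × ℝ => g q.1 := hg.comp measurable_fst
  have h₂ : Measurable fun q : ℝ × ℝ => g q.2 := hg.comp measurable_snd
  exact Measurable.ite (measurableSet_eq_fun (h₁.add h₂) measurable_const) measurable_const
    (h₁.div (h₁.add h₂))

lemma measurable_successOfDist (hg : Measurable g) : Measurable (uncurry (successOfDist g)) :=
  Measurable.ite (measurableSet_lt measurable_fst measurable_snd) (measurable_pickFirst hg)
    (Measurable.ite (measurableSet_lt measurable_snd measurable_fst)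
      ((measurable_pickFirst hg).comp measurable_swap) measurable_const)

lemma measurable_closerPicked (hg : Measurable g) : Measurable (uncurry (closerPicked g)) :=
  Measurable.ite (measurableSet_lt measurable_fst measurable_snd) (measurable_pickFirst hg)
    measurable_const

lemma intervalIntegrable_closerPicked (hg : Measurable g) (hg₀ : ∀ s, 0 ≤ g s) (s a b : ℝ) :
    IntervalIntegrable (closerPicked g s) volume a b :=
  intervalIntegrable_of_abs_le
    ((measurable_closerPicked hg).comp (measurable_const.prodMk measurable_id))
    (abs_closerPicked_le_one hg₀ s) a b

lemma closerPicked_of_le {s t : ℝ} (h : t ≤ s) : closerPicked g s t = 0 :=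
  if_neg h.not_gt

lemma successOfDist_eq_add_swap {s t : ℝ} (h : s ≠ t) :
    successOfDist g s t = closerPicked g s t + closerPicked g t s := by
  rcases h.lt_or_gt with h | h
  · simp [successOfDist, closerPicked, h, h.not_gt]
  · simp [successOfDist, closerPicked, h, h.not_gt]

end Profile

theorem integral_integral_successOfDist {g : ℝ → ℝ} (hg : Measurable g) (hg₀ : ∀ s, 0 ≤ g s)
    {a b : ℝ} (hab : a ≤ b) :
    ∫ s in a..b, ∫ t in a..b, successOfDist g s t
      = 2 * ∫ s in a..b, ∫ t in a..b, closerPicked g s t := by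
  simp only [integral_of_le hab]
  exact (integral_integral_eq_two_nsmul_of_eq_add_swap
    (integrable_uncurry_of_abs_le (measurable_closerPicked hg) (abs_closerPicked_le_one hg₀) a b)
    fun _ _ => successOfDist_eq_add_swap).trans (nsmul_eq_mul 2 _)

noncomputable def tent (ε s : ℝ) : ℝ := max 0 (1 - s / ε)

lemma simSucc_eq_successOfDist (ε x₁ x₂ p : ℝ) :
    simSucc ε x₁ x₂ p = successOfDist (tent ε) (circleDist x₁ p) (circleDist x₂ p) := rfl

lemma tent_nonneg (ε s : ℝ) : 0 ≤ tent ε s := le_max_left _ _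

lemma measurable_tent (ε : ℝ) : Measurable (tent ε) := by
  unfold tent; fun_prop

section Tent

variable {ε c s t : ℝ}

lemma tent_of_le (hε : 0 < ε) (h : s ≤ ε) : tent ε s = 1 - s / ε :=
  max_eq_right (sub_nonneg.2 ((div_le_one hε).2 h))

lemma tent_of_ge (hε : 0 < ε) (h : ε ≤ s) : tent ε s = 0 :=
  max_eq_left (sub_nonpos.2 ((one_le_div hε).2 h))

lemma closerPicked_tent_of_lt_of_le (hε : 0 < ε) (hst : s < t) (ht : t ≤ ε) :
    closerPicked (tent ε) s t = (ε - s) / (2 * ε - s - t) := by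
  have hsum : tent ε s + tent ε t = (2 * ε - s - t) / ε := by
    rw [tent_of_le hε (by linarith), tent_of_le hε ht]; field_simp; ring
  have hpos : 0 < 2 * ε - s - t := by linarith
  rw [closerPicked, if_pos hst, pickFirst, hsum, if_neg (div_pos hpos hε).ne',
    tent_of_le hε (by linarith)]
  field_simp

lemma closerPicked_tent_of_lt_of_ge (hε : 0 < ε) (hs : s < ε) (ht : ε ≤ t) :
    closerPicked (tent ε) s t = 1 := by
  have hpos : 0 < tent ε s := by rw [tent_of_le hε hs.le, sub_pos, div_lt_one hε]; exact hs
  rw [closerPicked, if_pos (hs.trans_le ht), pickFirst, tent_of_ge hε ht, add_zero,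
    if_neg hpos.ne', div_self hpos.ne']

lemma closerPicked_tent_of_ge_of_lt (hε : 0 < ε) (hs : ε ≤ s) (hst : s < t) :
    closerPicked (tent ε) s t = 1 / 2 := by
  rw [closerPicked, if_pos hst, pickFirst, tent_of_ge hε hs, tent_of_ge hε (hs.trans hst.le),
    add_zero, if_pos rfl]

lemma integral_closerPicked_tent_of_lt (hs₀ : 0 ≤ s) (hs : s < ε) (hεc : ε ≤ c) :
    ∫ t in (0 : ℝ)..c, closerPicked (tent ε) s t = (ε - s) * Real.log 2 + (c - ε) := by
  have hε : 0 < ε := hs₀.trans_lt hs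
  have hI := intervalIntegrable_closerPicked (measurable_tent ε) (tent_nonneg ε) s
  have h₁ : ∫ t in (0 : ℝ)..s, closerPicked (tent ε) s t = 0 := by
    rw [integral_congr (g := fun _ => 0) fun t ht => ?_, intervalIntegral.integral_zero]
    rw [uIcc_of_le hs₀] at ht
    exact closerPicked_of_le ht.2
  have h₂ : ∫ t in s..ε, closerPicked (tent ε) s t = (ε - s) * Real.log 2 := by
    rw [intervalIntegral.integral_congr_ae (g := fun t => (ε - s) / (2 * ε - s - t))
      (ae_of_all _ fun t ht => ?_)]
    · have ha : 0 < ε - s := sub_pos.2 hs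
      rw [integral_comp_sub_left (fun x => (ε - s) / x) (2 * ε - s),
        show 2 * ε - s - ε = ε - s by ring, show 2 * ε - s - s = 2 * (ε - s) by ring]
      simp only [div_eq_mul_inv, intervalIntegral.integral_const_mul]
      rw [integral_inv_of_pos ha (by positivity), mul_div_cancel_right₀ 2 ha.ne']
    · rw [uIoc_of_le hs.le] at ht
      exact closerPicked_tent_of_lt_of_le hε ht.1 ht.2
  have h₃ : ∫ t in ε..c, closerPicked (tent ε) s t = c - ε := by
    rw [intervalIntegral.integral_congr_ae (g := fun _ => 1) (ae_of_all _ fun t ht => ?_),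
      intervalIntegral.integral_const, smul_eq_mul, mul_one]
    rw [uIoc_of_le hεc] at ht
    exact closerPicked_tent_of_lt_of_ge hε hs ht.1.le
  rw [← integral_add_adjacent_intervals (hI 0 s) (hI s c),
    ← integral_add_adjacent_intervals (hI s ε) (hI ε c), h₁, h₂, h₃, zero_add]

lemma integral_closerPicked_tent_of_ge (hε : 0 < ε) (hs : ε ≤ s) (hsc : s ≤ c) :
    ∫ t in (0 : ℝ)..c, closerPicked (tent ε) s t = (c - s) / 2 := by
  have hI := intervalIntegrable_closerPicked (measurable_tent ε) (tent_nonneg ε) s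
  have h₁ : ∫ t in (0 : ℝ)..s, closerPicked (tent ε) s t = 0 := by
    rw [integral_congr (g := fun _ => 0) fun t ht => ?_, intervalIntegral.integral_zero]
    rw [uIcc_of_le (hε.le.trans hs)] at ht
    exact closerPicked_of_le ht.2
  have h₂ : ∫ t in s..c, closerPicked (tent ε) s t = (c - s) / 2 := by
    rw [intervalIntegral.integral_congr_ae (g := fun _ => 1 / 2) (ae_of_all _ fun t ht => ?_),
      intervalIntegral.integral_const, smul_eq_mul, mul_one_div]
    rw [uIoc_of_le hsc] at ht
    exact closerPicked_tent_of_ge_of_lt hε hs ht.1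
  rw [← integral_add_adjacent_intervals (hI 0 s) (hI s c), h₁, h₂, zero_add]

theorem integral_integral_closerPicked_tent (hε : 0 < ε) (hεc : ε ≤ c) :
    ∫ s in (0 : ℝ)..c, ∫ t in (0 : ℝ)..c, closerPicked (tent ε) s t
      = ε ^ 2 / 2 * Real.log 2 + ε * (c - ε) + (c - ε) ^ 2 / 4 := by
  have hI := intervalIntegrable_integral_of_abs_le (measurable_closerPicked (measurable_tent ε))
    (abs_closerPicked_le_one (tent_nonneg ε)) (hε.le.trans hεc)
  have h₁ : ∫ s in (0 : ℝ)..ε, ∫ t in (0 : ℝ)..c, closerPicked (tent ε) s t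
      = ε ^ 2 / 2 * Real.log 2 + ε * (c - ε) := by
    rw [intervalIntegral.integral_congr_ae (g := fun s => (ε - s) * Real.log 2 + (c - ε))]
    · rw [integral_comp_sub_left (fun x => x * Real.log 2 + (c - ε)) ε, sub_self, sub_zero,
        intervalIntegral.integral_add (Continuous.intervalIntegrable (by fun_prop) _ _)
        intervalIntegrable_const, intervalIntegral.integral_mul_const, integral_id,
        intervalIntegral.integral_const, smul_eq_mul]
      ring
    · filter_upwards [volume.ae_ne ε] with s hsε hs
      rw [uIoc_of_le hε.le] at hs
      exact integral_closerPicked_tent_of_lt hs.1.le (lt_of_le_of_ne hs.2 hsε) hεc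
  have h₂ : ∫ s in ε..c, ∫ t in (0 : ℝ)..c, closerPicked (tent ε) s t = (c - ε) ^ 2 / 4 := by
    rw [intervalIntegral.integral_congr_ae (g := fun s => (c - s) / 2)
      (ae_of_all _ fun s hs => ?_)]
    · rw [intervalIntegral.integral_div, integral_comp_sub_left (fun x => x), sub_self,
        integral_id]
      ring
    · rw [uIoc_of_le hεc] at hs
      exact integral_closerPicked_tent_of_ge hε hs.1.le hs.2
  rw [← integral_add_adjacent_intervals (hI 0 ε) (hI ε c), h₁, h₂]

end Tent

theorem stmt16 (ε : ℝ) (hε0 : 0 < ε) (hε : ε ≤ 1/2) (b : ℝ) (hb : b = 2 * ε) :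
    ∫ p in Set.Ico (0:ℝ) 1, ∫ x₁ in Set.Ico (0:ℝ) 1, ∫ x₂ in Set.Ico (0:ℝ) 1,
        simSucc ε x₁ x₂ p
      = 1/2 + b - (3/2 - Real.log 2) * b ^ 2 := by
  have hprobe : ∀ p ∈ Ico (0 : ℝ) 1,
      ∫ x₁ in Ico (0 : ℝ) 1, ∫ x₂ in Ico (0 : ℝ) 1, simSucc ε x₁ x₂ p
        = 8 * (ε ^ 2 / 2 * Real.log 2 + ε * (1 / 2 - ε) + (1 / 2 - ε) ^ 2 / 4) := fun p hp => by
    simp only [simSucc_eq_successOfDist]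
    rw [setIntegral_Ico_Ico_circleDist (measurable_successOfDist (measurable_tent ε))
        (abs_successOfDist_le_one (tent_nonneg ε)) (Ico_subset_Icc_self hp),
      integral_integral_successOfDist (measurable_tent ε) (tent_nonneg ε) (by norm_num),
      integral_integral_closerPicked_tent hε0 hε]
    ring
  rw [setIntegral_congr_fun measurableSet_Ico hprobe, setIntegral_const,
    Real.volume_real_Ico_of_le zero_le_one, sub_zero, one_smul, hb]
  ring
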